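/- Suppose an instance of P2,S1|s_j,t_j|C_max satisfies p_j < s_i for all pairs of jobs i, j. Then the minimum makespan over all feasible schedules equals Σ_{j=1}^n A_j, and for every permutation π of the jobs the sequential schedule σ_{π(k)} = Σ_{l<k} A_{π(l)} (with all jobs on one machine) is an optimal schedule; that is, all permutations define an optimal solution. -/

import Mathlib

/-! When every processing time is shorter than every loading time, no two jobs can overlap in
time at all: a job started while another one is running would have to be loaded during that
job's processing phase. Hence every feasible schedule is in effect a one-machine schedule and
its makespan is at least `∑ j, A j`, which every back-to-back sequence attains. -/

open Finset

/-- An instance of the problem `P2,S1|s_j,t_j|C_max`: `n` jobs, each with positive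
loading time `s j`, processing time `p j`, and unloading time `t j`. -/
structure PInstance (n : ℕ) where
  s : Fin n → ℝ
  p : Fin n → ℝ
  t : Fin n → ℝ
  s_pos : ∀ j, 0 < s j
  p_pos : ∀ j, 0 < p j
  t_pos : ∀ j, 0 < t j

namespace PInstance

variable {n : ℕ}

/-- The length `A j = s j + p j + t j` of job `j`. -/
def A (I : PInstance n) (j : Fin n) : ℝ := I.s j + I.p j + I.t j

/-- Feasibility of the schedule assigning start time `σ j` and machine `μ j` to job `j`:
start times are nonnegative, machines are in `{1, 2}`, distinct jobs on the same machine
occupy disjoint half-open intervals `[σ j, σ j + A j)`, and the `2n` server intervals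
(the loading intervals `[σ j, σ j + s j)` and the unloading intervals
`[σ j + s j + p j, σ j + A j)`) are pairwise disjoint. -/
def Feasible (I : PInstance n) (σ : Fin n → ℝ) (μ : Fin n → ℕ) : Prop :=
  (∀ j, 0 ≤ σ j) ∧
  (∀ j, μ j = 1 ∨ μ j = 2) ∧
  (∀ i j, i ≠ j → μ i = μ j → σ i + I.A i ≤ σ j ∨ σ j + I.A j ≤ σ i) ∧
  (∀ i j, i ≠ j → σ i + I.s i ≤ σ j ∨ σ j + I.s j ≤ σ i) ∧
  (∀ i j, i ≠ j →
    σ i + I.A i ≤ σ j + I.s j + I.p j ∨ σ j + I.A j ≤ σ i + I.s i + I.p i) ∧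
  (∀ i j, σ i + I.s i ≤ σ j + I.s j + I.p j ∨ σ j + I.A j ≤ σ i)

/-- `C` is the makespan of the schedule with start times `σ`:
`C = max_{j=1,…,n} (σ j + A j)`. -/
def IsMakespan (I : PInstance n) (σ : Fin n → ℝ) (C : ℝ) : Prop :=
  (∀ j, σ j + I.A j ≤ C) ∧ ∃ j, σ j + I.A j = C

end PInstance

theorem Finset.sum_le_sub_of_pairwise_disjoint {ι : Type*} [DecidableEq ι] (σ A : ι → ℝ)
    (hA : ∀ i, 0 < A i) (S : Finset ι)
    (hd : (S : Set ι).Pairwise fun i j => σ i + A i ≤ σ j ∨ σ j + A j ≤ σ i)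
    {a b : ℝ} (hab : a ≤ b) (ha : ∀ i ∈ S, a ≤ σ i) (hb : ∀ i ∈ S, σ i + A i ≤ b) :
    ∑ i ∈ S, A i ≤ b - a := by
  induction S using Finset.induction_on_max_value σ generalizing b with
  | empty => simpa using hab
  | insert j S hjS hmax ih =>
    have hS : ∀ i ∈ S, σ i + A i ≤ σ j := fun i hi => by
      have hij : i ≠ j := fun h => hjS (h ▸ hi)
      rcases hd (by simp [hi]) (by simp) hij with h | h
      · exact h
      · linarith [hmax i hi, hA j]
    have := ih (hd.mono (by simp)) (ha j (by simp)) (fun i hi => ha i (by simp [hi])) hS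
    rw [Finset.sum_insert hjS]
    linarith [hb j (by simp)]

section Sequential

variable {ι M : Type*} [Fintype ι] [LinearOrder ι] [AddCommMonoid M]

def sequentialStart (a : ι → M) (π : Equiv.Perm ι) (j : ι) : M :=
  ∑ l ∈ univ.filter (· < π.symm j), a (π l)

theorem sequentialStart_nonneg [PartialOrder M] [IsOrderedAddMonoid M] {a : ι → M}
    (ha : ∀ i, 0 ≤ a i) (π : Equiv.Perm ι) (j : ι) : 0 ≤ sequentialStart a π j :=
  sum_nonneg fun l _ => ha (π l)

variable [LocallyFiniteOrderBot ι]

theorem sequentialStart_add_eq_sum_Iic (a : ι → M) (π : Equiv.Perm ι) (j : ι) :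
    sequentialStart a π j + a j = ∑ l ∈ Iic (π.symm j), a (π l) := by
  rw [sequentialStart, filter_gt_eq_Iio, ← Iio_insert, sum_insert notMem_Iio_self,
    Equiv.apply_symm_apply, add_comm]

theorem sequentialStart_add_eq_sum (a : ι → M) (π : Equiv.Perm ι) {j : ι}
    (hj : IsTop (π.symm j)) : sequentialStart a π j + a j = ∑ i, a i := by
  rw [sequentialStart_add_eq_sum_Iic, ← Equiv.sum_comp π a]
  exact sum_congr (eq_univ_of_forall fun l => mem_Iic.2 (hj l)) fun _ _ => rfl

variable [PartialOrder M] [IsOrderedAddMonoid M] {a : ι → M} (ha : ∀ i, 0 ≤ a i)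
  (π : Equiv.Perm ι)
include ha

theorem sequentialStart_add_le_of_lt {i j : ι} (h : π.symm i < π.symm j) :
    sequentialStart a π i + a i ≤ sequentialStart a π j := by
  rw [sequentialStart_add_eq_sum_Iic, sequentialStart, filter_gt_eq_Iio]
  exact sum_le_sum_of_subset_of_nonneg (fun l hl => mem_Iio.2 ((mem_Iic.1 hl).trans_lt h))
    fun l _ _ => ha (π l)

theorem sequentialStart_add_le_sum (j : ι) : sequentialStart a π j + a j ≤ ∑ i, a i := by
  rw [sequentialStart_add_eq_sum_Iic, ← Equiv.sum_comp π a]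
  exact sum_le_sum_of_subset_of_nonneg (subset_univ _) fun l _ _ => ha (π l)

theorem sequentialStart_disjoint {i j : ι} (hij : i ≠ j) :
    sequentialStart a π i + a i ≤ sequentialStart a π j ∨
      sequentialStart a π j + a j ≤ sequentialStart a π i :=
  (π.symm.injective.ne hij).lt_or_gt.imp (sequentialStart_add_le_of_lt ha π)
    (sequentialStart_add_le_of_lt ha π)

end Sequential

namespace PInstance

variable {n : ℕ} (I : PInstance n)

theorem A_pos (j : Fin n) : 0 < I.A j := by
  linarith [I.s_pos j, I.p_pos j, I.t_pos j, show I.A j = I.s j + I.p j + I.t j from rfl]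

theorem feasible_of_pairwise_disjoint {σ : Fin n → ℝ} (h0 : ∀ j, 0 ≤ σ j)
    (hd : ∀ i j, i ≠ j → σ i + I.A i ≤ σ j ∨ σ j + I.A j ≤ σ i) :
    I.Feasible σ fun _ => 1 := by
  have hs := I.s_pos; have hp := I.p_pos; have ht := I.t_pos
  have hA (j : Fin n) : I.A j = I.s j + I.p j + I.t j := rfl
  refine ⟨h0, fun _ => Or.inl rfl, fun i j hij _ => hd i j hij, fun i j hij => ?_,
    fun i j hij => ?_, fun i j => ?_⟩
  · rcases hd i j hij with h | h <;> [left; right] <;>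
      linarith [hp i, ht i, hp j, ht j, hA i, hA j]
  · rcases hd i j hij with h | h <;> [left; right] <;>
      linarith [hs i, hp i, hs j, hp j, hA i, hA j]
  · rcases eq_or_ne i j with rfl | hij
    · exact Or.inl (by linarith [hp i])
    rcases hd i j hij with h | h <;> [left; right] <;>
      linarith [hp i, ht i, hs j, hp j, hA i, hA j]

variable {I} {σ : Fin n → ℝ} {μ : Fin n → ℕ}

theorem Feasible.add_A_le_of_le (hf : I.Feasible σ μ) {i j : Fin n} (hij : i ≠ j)
    (hps : I.p i < I.s j) (hle : σ i ≤ σ j) : σ i + I.A i ≤ σ j := by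
  obtain ⟨-, -, -, hload, -, hmix⟩ := hf
  refine (hmix j i).resolve_left fun hunload => ?_
  rcases hload i j hij with h | h
  · linarith
  · linarith [I.s_pos j]

theorem Feasible.pairwise_disjoint (hf : I.Feasible σ μ) (hps : ∀ i j, I.p j < I.s i)
    {i j : Fin n} (hij : i ≠ j) : σ i + I.A i ≤ σ j ∨ σ j + I.A j ≤ σ i :=
  (le_total (σ i) (σ j)).imp (hf.add_A_le_of_le hij (hps j i))
    (hf.add_A_le_of_le hij.symm (hps i j))

theorem Feasible.sum_A_le (hf : I.Feasible σ μ) (hps : ∀ i j, I.p j < I.s i) {C : ℝ}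
    (hC : I.IsMakespan σ C) : ∑ j, I.A j ≤ C := by
  obtain ⟨hle, j, hj⟩ := hC
  have hC0 : 0 ≤ C := by linarith [hf.1 j, I.A_pos j]
  simpa using univ.sum_le_sub_of_pairwise_disjoint σ I.A I.A_pos
    (fun i _ j _ hij => hf.pairwise_disjoint hps hij) hC0 (fun i _ => hf.1 i) fun i _ => hle i

variable (I)

theorem feasible_sequentialStart (π : Equiv.Perm (Fin n)) :
    I.Feasible (sequentialStart I.A π) fun _ => 1 :=
  I.feasible_of_pairwise_disjoint (sequentialStart_nonneg (fun j => (I.A_pos j).le) π)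
    fun _ _ => sequentialStart_disjoint (fun j => (I.A_pos j).le) π

theorem isMakespan_sequentialStart (hn : 0 < n) (π : Equiv.Perm (Fin n)) :
    I.IsMakespan (sequentialStart I.A π) (∑ j, I.A j) := by
  refine ⟨sequentialStart_add_le_sum (fun j => (I.A_pos j).le) π, π ⟨n - 1, by omega⟩,
    sequentialStart_add_eq_sum I.A π ?_⟩
  rw [Equiv.symm_apply_apply]
  exact fun l => Fin.le_def.2 (Nat.le_sub_one_of_lt l.2)

end PInstance

/-- If `p j < s i` for all pairs of jobs `i, j`, then the minimum makespan
over all feasible schedules equals `Σ_j A j`, and for every permutation `π` the sequential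
schedule `σ (π k) = Σ_{l < k} A (π l)` (all jobs on one machine) is optimal; that is, all
permutations define an optimal solution. -/
theorem short_processing_all_permutations_optimal {n : ℕ} (hn : 0 < n) (I : PInstance n)
    (hps : ∀ i j, I.p j < I.s i) :
    (∀ (σ : Fin n → ℝ) (μ : Fin n → ℕ) (C : ℝ),
        I.Feasible σ μ → I.IsMakespan σ C → (∑ j, I.A j) ≤ C) ∧
      (∀ π : Equiv.Perm (Fin n),
        I.Feasible
            (fun j => ∑ l ∈ Finset.univ.filter (fun l => l < π.symm j), I.A (π l))
            (fun _ => 1) ∧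
          I.IsMakespan
            (fun j => ∑ l ∈ Finset.univ.filter (fun l => l < π.symm j), I.A (π l))
            (∑ j, I.A j)) :=
  ⟨fun _ _ _ hf hC => hf.sum_A_le hps hC,
    fun π => ⟨I.feasible_sequentialStart π, I.isMakespan_sequentialStart hn π⟩⟩
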